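/- arXiv:1211.6156 — 2 statements merged into one kernel-verified Lean document; each statement's English description precedes it below -/
import Mathlib

section
/- Let a : (0, t₂] → ℝ be twice differentiable with a > 0, ȧ > 0, ä > 0 on (0, t₂], and suppose ä(t)a(t)/ȧ(t)² → +∞ and ȧ(t) → α ∈ (0, +∞] as t → 0⁺. Then ∫_0^{t₂} du/a(u) is finite (the improper integral converges). -/
open Set Filter Topology MeasureTheory

/-!
Since `ȧ` is increasing on `(0, t₂]`, it cannot tend to `+∞` at `0⁺`, so `ȧ → α > 0`. Near `0` the
hypothesis `ä a / ȧ² → +∞` gives `1 / a ≤ ä / ȧ² = (-1 / ȧ)'`, and `-1 / ȧ` has the finite limit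
`-1 / α` at `0⁺`; hence `ä / ȧ²`, and by comparison `1 / a`, is integrable near `0`.
-/

theorem MonotoneOn.not_tendsto_atTop_nhdsGT {α β : Type*} [LinearOrder α] [TopologicalSpace α]
    [OrderTopology α] [DenselyOrdered α] [Preorder β] [NoMaxOrder β] {f : α → β} {a b : α}
    (hab : a < b) (hf : MonotoneOn f (Ioc a b)) : ¬ Tendsto f (𝓝[>] a) atTop := by
  intro h
  have := nhdsGT_neBot_of_exists_gt ⟨b, hab⟩
  obtain ⟨t, hft, ht⟩ :=
    ((h.eventually (eventually_gt_atTop (f b))).and (Ioo_mem_nhdsGT hab)).exists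
  exact (hf (Ioo_subset_Ioc_self ht) (right_mem_Ioc.2 hab) ht.2.le).not_gt hft

theorem one_div_le_div_of_one_le_mul_div {x y z : ℝ} (hy : 0 < y) (h : 1 ≤ x * y / z) :
    1 / y ≤ x / z :=
  calc 1 / y ≤ (x * y / z) / y := by gcongr
    _ = x / z := by field_simp

theorem HasDerivAt.neg_inv {f : ℝ → ℝ} {f' x : ℝ} (hf : HasDerivAt f f' x) (hx : f x ≠ 0) :
    HasDerivAt (fun y => -(f y)⁻¹) (f' / f x ^ 2) x := by
  simpa [neg_div] using (hf.fun_inv hx).fun_neg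

theorem integrableOn_Ioc_deriv_of_nonneg_of_tendsto {F F' : ℝ → ℝ} {a b l : ℝ}
    (hcont : ContinuousOn F (Ioc a b)) (hderiv : ∀ x ∈ Ioo a b, HasDerivAt F (F' x) x)
    (hnonneg : ∀ x ∈ Ioo a b, 0 ≤ F' x) (hlim : Tendsto F (𝓝[>] a) (𝓝 l)) :
    IntegrableOn F' (Ioc a b) := by
  classical
  have hcont' : ContinuousOn (Function.update F a l) (Icc a b) := by
    rw [continuousOn_update_iff, Icc_sdiff_left]
    exact ⟨hcont, fun _ => hlim.mono_left (nhdsWithin_mono _ Ioc_subset_Ioi_self)⟩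
  refine intervalIntegral.integrableOn_deriv_of_nonneg hcont' (fun x hx => ?_) hnonneg
  refine (hderiv x hx).congr_of_eventuallyEq ?_
  filter_upwards [eventually_ne_nhds hx.1.ne'] with y hy
  exact Function.update_of_ne hy _ _

theorem integrableOn_Ioc_deriv_div_sq_of_tendsto {f : ℝ → ℝ} {a b α : ℝ}
    (hf : ∀ x ∈ Ioc a b, DifferentiableAt ℝ f x) (hf₀ : ∀ x ∈ Ioc a b, f x ≠ 0)
    (hf' : ∀ x ∈ Ioo a b, 0 ≤ deriv f x) (hlim : Tendsto f (𝓝[>] a) (𝓝 α)) (hα : α ≠ 0) :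
    IntegrableOn (fun x => deriv f x / f x ^ 2) (Ioc a b) := by
  refine integrableOn_Ioc_deriv_of_nonneg_of_tendsto (F := fun x => -(f x)⁻¹) (l := -α⁻¹)
    ?_ (fun x hx => ?_) (fun x hx => ?_) (hlim.inv₀ hα).neg
  · exact (ContinuousOn.inv₀ (fun x hx => (hf x hx).continuousAt.continuousWithinAt) hf₀).neg
  · exact (hf x (Ioo_subset_Ioc_self hx)).hasDerivAt.neg_inv (hf₀ x (Ioo_subset_Ioc_self hx))
  · have := hf' x hx
    positivity

theorem ContinuousOn.integrableOn_Ioc_of_integrableOn_Ioc {f : ℝ → ℝ} {a b c : ℝ}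
    (hf : ContinuousOn f (Ioc a b)) (hc : c ∈ Ioc a b) (h : IntegrableOn f (Ioc a c)) :
    IntegrableOn f (Ioc a b) := by
  have h_right : IntegrableOn f (Icc c b) :=
    (hf.mono (Icc_subset_Ioc hc.1 le_rfl)).integrableOn_Icc
  rw [← Ioc_union_Ioc_eq_Ioc hc.1.le hc.2]
  exact h.union (h_right.mono_set Ioc_subset_Icc_self)

theorem stmt11 (t₂ : ℝ) (ht₂ : 0 < t₂) (a : ℝ → ℝ)
    (hdiff : ∀ t ∈ Ioc (0:ℝ) t₂, DifferentiableAt ℝ a t ∧ DifferentiableAt ℝ (deriv a) t)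
    (hpos : ∀ t ∈ Ioc (0:ℝ) t₂, 0 < a t)
    (hda : ∀ t ∈ Ioc (0:ℝ) t₂, 0 < deriv a t)
    (hdda : ∀ t ∈ Ioc (0:ℝ) t₂, 0 < deriv (deriv a) t)
    (hlim : Tendsto (fun t => deriv (deriv a) t * a t / (deriv a t) ^ 2)
      (𝓝[>] (0:ℝ)) atTop)
    (hα : (∃ α : ℝ, 0 < α ∧ Tendsto (deriv a) (𝓝[>] (0:ℝ)) (𝓝 α)) ∨
      Tendsto (deriv a) (𝓝[>] (0:ℝ)) atTop) :
    IntegrableOn (fun u => 1 / a u) (Ioc 0 t₂) := by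
  have hcont_da : ContinuousOn (deriv a) (Ioc 0 t₂) := fun t ht =>
    (hdiff t ht).2.continuousAt.continuousWithinAt
  have hmono : MonotoneOn (deriv a) (Ioc 0 t₂) :=
    (strictMonoOn_of_deriv_pos (convex_Ioc 0 t₂) hcont_da fun t ht =>
      hdda t (interior_subset ht)).monotoneOn
  obtain ⟨α, hα_pos, hα_lim⟩ := hα.resolve_right (hmono.not_tendsto_atTop_nhdsGT ht₂)
  obtain ⟨t₀, ht₀, hsub⟩ := mem_nhdsGT_iff_exists_Ioc_subset.1
    ((hlim.eventually (eventually_ge_atTop 1)).and (Ioc_mem_nhdsGT ht₂))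
  have ht₀_mem : t₀ ∈ Ioc 0 t₂ := (hsub (right_mem_Ioc.2 ht₀)).2
  have hsub₂ : Ioc 0 t₀ ⊆ Ioc 0 t₂ := Ioc_subset_Ioc_right ht₀_mem.2
  have hg : IntegrableOn (fun t => deriv (deriv a) t / deriv a t ^ 2) (Ioc 0 t₀) :=
    integrableOn_Ioc_deriv_div_sq_of_tendsto (fun t ht => (hdiff t (hsub₂ ht)).2)
      (fun t ht => (hda t (hsub₂ ht)).ne')
      (fun t ht => (hdda t (hsub₂ (Ioo_subset_Ioc_self ht))).le) hα_lim hα_pos.ne'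
  have hcont : ContinuousOn (fun t => 1 / a t) (Ioc 0 t₂) :=
    continuousOn_const.div (fun t ht => (hdiff t ht).1.continuousAt.continuousWithinAt)
      fun t ht => (hpos t ht).ne'
  refine hcont.integrableOn_Ioc_of_integrableOn_Ioc ht₀_mem (hg.mono'
    ((hcont.mono hsub₂).aestronglyMeasurable measurableSet_Ioc)
    (ae_restrict_of_forall_mem measurableSet_Ioc fun t ht => ?_))
  have hat := hpos t (hsub ht).2
  rw [Real.norm_of_nonneg (one_div_pos.2 hat).le]
  exact one_div_le_div_of_one_le_mul_div hat (hsub ht).1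
end

section
/- Suppose the FRW field equations hold: ä/a = -(1/6)(μ+3p) and 3ȧ² = μa² - 3K, with p = (γ-1)μ(1+o(1)) as t → 0⁺ for a constant γ, and ȧ(t)² → +∞ as t → 0⁺. Then ä a/ȧ² → -(1/2)(3γ-2) as t → 0⁺; in particular if γ < 2/3 this limit is strictly positive. -/
/-!
Eliminating `μ` and `p` between the two field equations gives
`ä a = -(1/2) (1 + 3 (γ - 1) (1 + f)) (ȧ² + K)`, so `ä a / ȧ²` is
`-(1/2) (1 + K / ȧ²) (1 + 3 (γ - 1) (1 + f))`; as `ȧ² → ∞` and `f → 0` this tends to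
`-(1/2) (3γ - 2)`.
-/

open Set Filter Topology

lemma accel_mul_div_sq_eq {a a' a'' μ p f γ K : ℝ} (ha : a ≠ 0) (ha' : a' ≠ 0)
    (hray : a'' / a = -(1 / 6) * (μ + 3 * p)) (hfried : 3 * a' ^ 2 = μ * a ^ 2 - 3 * K)
    (heos : p = (γ - 1) * μ * (1 + f)) :
    a'' * a / a' ^ 2 = -(1 / 2) * (1 + K / a' ^ 2) * (1 + 3 * (γ - 1) * (1 + f)) := by
  have ha'' : a'' = -(1 / 6) * (μ + 3 * p) * a := by
    rw [← hray, div_mul_cancel₀ _ ha]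
  have key : a'' * a = -(1 / 2) * (1 + 3 * (γ - 1) * (1 + f)) * (a' ^ 2 + K) := by
    rw [ha'', heos]
    linear_combination (1 / 6 * (1 + 3 * (γ - 1) * (1 + f))) * hfried
  rw [key]
  field_simp

lemma tendsto_accel_ratio {α : Type*} {l : Filter α} {f g : α → ℝ} (γ K : ℝ)
    (hf : Tendsto f l (𝓝 0)) (hg : Tendsto g l atTop) :
    Tendsto (fun x => -(1 / 2) * (1 + K / g x) * (1 + 3 * (γ - 1) * (1 + f x))) l
      (𝓝 (-(1 / 2) * (3 * γ - 2))) := by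
  have hK : Tendsto (fun x => K / g x) l (𝓝 0) := tendsto_const_nhds.div_atTop hg
  convert ((tendsto_const_nhds.add hK).const_mul (-(1 / 2))).mul
    ((tendsto_const_nhds.add hf).const_mul (3 * (γ - 1)) |>.const_add 1) using 2
  ring

theorem stmt16_general (t₁ : ℝ) (ht₁ : 0 < t₁) (a μ p f : ℝ → ℝ) (γ K : ℝ)
    (hapos : ∀ t ∈ Ioc (0:ℝ) t₁, 0 < a t)
    (hray : ∀ t ∈ Ioc (0:ℝ) t₁,
      deriv (deriv a) t / a t = -(1 / 6) * (μ t + 3 * p t))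
    (hfried : ∀ t ∈ Ioc (0:ℝ) t₁,
      3 * (deriv a t) ^ 2 = μ t * (a t) ^ 2 - 3 * K)
    (heos : ∀ t ∈ Ioc (0:ℝ) t₁, p t = (γ - 1) * μ t * (1 + f t))
    (hf : Tendsto f (𝓝[>] (0:ℝ)) (𝓝 0))
    (hda : Tendsto (fun t => (deriv a t) ^ 2) (𝓝[>] (0:ℝ)) atTop) :
    Tendsto (fun t => deriv (deriv a) t * a t / (deriv a t) ^ 2)
      (𝓝[>] (0:ℝ)) (𝓝 (-(1 / 2) * (3 * γ - 2))) ∧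
    (γ < 2 / 3 → 0 < -(1 / 2) * (3 * γ - 2)) := by
  refine ⟨?_, fun hγ => by linarith⟩
  have hIoc : Ioc (0:ℝ) t₁ ∈ 𝓝[>] (0:ℝ) := Ioc_mem_nhdsGT ht₁
  have hda_ne : ∀ᶠ t in 𝓝[>] (0:ℝ), deriv a t ≠ 0 :=
    (hda.eventually_gt_atTop 0).mono fun t ht h => by simp [h] at ht
  refine (tendsto_accel_ratio γ K hf hda).congr' ?_
  filter_upwards [hIoc, hda_ne] with t ht hne
  exact (accel_mul_div_sq_eq (hapos t ht).ne' hne (hray t ht) (hfried t ht) (heos t ht)).symm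

theorem stmt16 (t₁ : ℝ) (ht₁ : 0 < t₁) (a μ p f : ℝ → ℝ) (γ K : ℝ)
    (hapos : ∀ t ∈ Ioc (0:ℝ) t₁, 0 < a t)
    (hμpos : ∀ t ∈ Ioc (0:ℝ) t₁, 0 < μ t)
    (hray : ∀ t ∈ Ioc (0:ℝ) t₁,
      deriv (deriv a) t / a t = -(1 / 6) * (μ t + 3 * p t))
    (hfried : ∀ t ∈ Ioc (0:ℝ) t₁,
      3 * (deriv a t) ^ 2 = μ t * (a t) ^ 2 - 3 * K)
    (heos : ∀ t ∈ Ioc (0:ℝ) t₁, p t = (γ - 1) * μ t * (1 + f t))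
    (hf : Tendsto f (𝓝[>] (0:ℝ)) (𝓝 0))
    (hda : Tendsto (fun t => (deriv a t) ^ 2) (𝓝[>] (0:ℝ)) atTop) :
    Tendsto (fun t => deriv (deriv a) t * a t / (deriv a t) ^ 2)
      (𝓝[>] (0:ℝ)) (𝓝 (-(1 / 2) * (3 * γ - 2))) ∧
    (γ < 2 / 3 → 0 < -(1 / 2) * (3 * γ - 2)) :=
  stmt16_general t₁ ht₁ a μ p f γ K hapos hray hfried heos hf hda
end
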